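/- For 0 < x < 1 and real numbers a, b with b > a, the integral ∫_x^1 t^a (1-t)^{b-a-1} [(x/t)^a - (x/t)^b] / (t - x) dt equals x^a (1-x)^{b-a-1} · log(1/x). -/

import Mathlib

/-!
With `d = b - a` the integrand is `x^a (1-t)^(d-1) (1 - (x/t)^d) / (t-x)`. The nonnegative kernel
`K(t, w) = d (1-x)^d (1-t)^(d-1) w^(d-1) (w(1-t) + t - x)^(-d-1)` on `(x, 1]²` has elementary
primitives in both variables: integrating out `w` gives `(1-t)^(d-1) (1 - (x/t)^d) / (t-x)`, and
integrating out `t` gives `(1-x)^(d-1) / w`. Fubini therefore turns the integral into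
`(1-x)^(d-1) ∫_x^1 dw/w = (1-x)^(d-1) log(1/x)`.
-/

open MeasureTheory Set Real intervalIntegral

theorem integral_eq_sub_of_hasDerivAt_of_nonneg {g g' : ℝ → ℝ} {a b : ℝ} (hab : a ≤ b)
    (hcont : ContinuousOn g (Icc a b)) (hderiv : ∀ y ∈ Ioo a b, HasDerivAt g (g' y) y)
    (hpos : ∀ y ∈ Ioo a b, 0 ≤ g' y) : ∫ y in a..b, g' y = g b - g a :=
  integral_eq_sub_of_hasDerivAt_of_le hab hcont hderiv <|
    (intervalIntegrable_iff_integrableOn_Ioc_of_le hab).2 <|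
      integrableOn_deriv_of_nonneg hcont hderiv hpos

noncomputable def logKernel (x d t w : ℝ) : ℝ :=
  d * (1 - x) ^ d * (1 - t) ^ (d - 1) * w ^ (d - 1) * (w * (1 - t) + (t - x)) ^ (-d - 1)

section logKernel

variable {x d t w : ℝ}

theorem measurable_logKernel (x d : ℝ) : Measurable (Function.uncurry (logKernel x d)) := by
  unfold logKernel; fun_prop

theorem logKernel_nonneg (hd : 0 ≤ d) (hxt : x ≤ t) (ht1 : t ≤ 1) (hw : 0 ≤ w) :
    0 ≤ logKernel x d t w := by
  have h1t : 0 ≤ 1 - t := by linarith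
  have hB : 0 ≤ w * (1 - t) + (t - x) := by nlinarith
  unfold logKernel
  have := rpow_nonneg (show 0 ≤ 1 - x by linarith) d
  have := rpow_nonneg h1t (d - 1)
  have := rpow_nonneg hw (d - 1)
  have := rpow_nonneg hB (-d - 1)
  positivity

theorem integral_logKernel_snd (hx0 : 0 < x) (hxt : x < t) (ht1 : t ≤ 1) (hd : 0 < d) :
    ∫ w in x..1, logKernel x d t w = (1 - t) ^ (d - 1) * ((1 - (x / t) ^ d) / (t - x)) := by
  have hx1 : x < 1 := hxt.trans_le ht1
  have ht0 : 0 < t := hx0.trans hxt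
  have htx : 0 < t - x := by linarith
  have h1x : 0 < 1 - x := by linarith
  have hB : ∀ w ∈ Icc x 1, 0 < w * (1 - t) + (t - x) := fun w hw => by
    nlinarith [hw.1, hw.2]
  let G : ℝ → ℝ := fun w =>
    (1 - t) ^ (d - 1) * (1 - x) ^ d * (w ^ d * (w * (1 - t) + (t - x)) ^ (-d)) / (t - x)
  have hderiv : ∀ w ∈ Ioo x 1, HasDerivAt G (logKernel x d t w) w := by
    intro w hw
    have hw0 : 0 < w := hx0.trans hw.1
    have hBw := hB w (Ioo_subset_Icc_self hw)
    have h1 := hasDerivAt_rpow_const (p := d) (Or.inl hw0.ne')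
    have h2 := ((((hasDerivAt_id' w).mul_const (1 - t)).add_const (t - x)).rpow_const
      (p := -d) (Or.inl hBw.ne'))
    refine (((h1.mul h2).const_mul _).div_const (t - x)).congr_deriv ?_
    have e1 : w ^ d = w ^ (d - 1) * w := by rw [← rpow_add_one hw0.ne']; ring_nf
    have e2 : (w * (1 - t) + (t - x)) ^ (-d)
        = (w * (1 - t) + (t - x)) ^ (-d - 1) * (w * (1 - t) + (t - x)) := by
      rw [← rpow_add_one hBw.ne']; ring_nf
    unfold logKernel
    rw [e1, e2]
    field_simp
    ring
  have hpos : ∀ w ∈ Ioo x 1, 0 ≤ logKernel x d t w := fun w hw =>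
    logKernel_nonneg hd.le hxt.le ht1 (hx0.trans hw.1).le
  have hcont : ContinuousOn G (Icc x 1) := by
    refine ContinuousOn.div_const (continuousOn_const.mul (ContinuousOn.mul ?_ ?_)) _
    · exact continuousOn_id.rpow_const fun _ _ => Or.inr hd.le
    · exact (by fun_prop : Continuous fun w : ℝ => w * (1 - t) + (t - x)).continuousOn.rpow_const
        fun w hw => Or.inl (hB w hw).ne'
  rw [integral_eq_sub_of_hasDerivAt_of_nonneg hx1.le hcont hderiv hpos]
  have hB1 : 1 * (1 - t) + (t - x) = 1 - x := by ring
  have hBx : x * (1 - t) + (t - x) = t * (1 - x) := by ring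
  have h1xd : (1 - x) ^ d ≠ 0 := (rpow_pos_of_pos h1x d).ne'
  have htd : t ^ d ≠ 0 := (rpow_pos_of_pos ht0 d).ne'
  simp only [G, hB1, hBx, one_rpow, mul_rpow ht0.le h1x.le, rpow_neg h1x.le, rpow_neg ht0.le,
    div_rpow hx0.le ht0.le]
  field_simp

theorem integral_logKernel_fst (hx1 : x < 1) (hw0 : 0 < w) (hw1 : w ≤ 1) (hd : 0 < d) :
    ∫ t in x..1, logKernel x d t w = (1 - x) ^ (d - 1) / w := by
  have h1x : 0 < 1 - x := by linarith
  have hB : ∀ t ∈ Icc x 1, 0 < w * (1 - t) + (t - x) := fun t ht => by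
    nlinarith [ht.1, mul_pos hw0 h1x, mul_nonneg (sub_nonneg.2 hw1) (sub_nonneg.2 ht.1)]
  let F : ℝ → ℝ := fun t =>
    -((1 - x) ^ (d - 1) * w ^ (d - 1) * ((1 - t) ^ d * (w * (1 - t) + (t - x)) ^ (-d)))
  have hderiv : ∀ t ∈ Ioo x 1, HasDerivAt F (logKernel x d t w) t := by
    intro t ht
    have h1t : 0 < 1 - t := by linarith [ht.2]
    have hBt := hB t (Ioo_subset_Icc_self ht)
    have h1 := ((hasDerivAt_id' t).const_sub 1).rpow_const (p := d) (Or.inl h1t.ne')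
    have h2 := ((((hasDerivAt_id' t).const_sub 1).const_mul w).fun_add
      ((hasDerivAt_id' t).sub_const x)).rpow_const (p := -d) (Or.inl hBt.ne')
    refine ((h1.mul h2).const_mul _).neg.congr_deriv ?_
    have e1 : (1 - t) ^ d = (1 - t) ^ (d - 1) * (1 - t) := by
      rw [← rpow_add_one h1t.ne']; ring_nf
    have e2 : (w * (1 - t) + (t - x)) ^ (-d)
        = (w * (1 - t) + (t - x)) ^ (-d - 1) * (w * (1 - t) + (t - x)) := by
      rw [← rpow_add_one hBt.ne']; ring_nf
    have e3 : (1 - x) ^ d = (1 - x) ^ (d - 1) * (1 - x) := by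
      rw [← rpow_add_one h1x.ne']; ring_nf
    unfold logKernel
    rw [e1, e2, e3]
    ring
  have hpos : ∀ t ∈ Ioo x 1, 0 ≤ logKernel x d t w := fun t ht =>
    logKernel_nonneg hd.le ht.1.le ht.2.le hw0.le
  have hcont : ContinuousOn F (Icc x 1) := by
    refine (continuousOn_const.mul (ContinuousOn.mul ?_ ?_)).neg
    · exact (continuous_const.sub continuous_id).continuousOn.rpow_const fun _ _ => Or.inr hd.le
    · exact (by fun_prop : Continuous fun t : ℝ => w * (1 - t) + (t - x)).continuousOn.rpow_const
        fun t ht => Or.inl (hB t ht).ne'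
  rw [integral_eq_sub_of_hasDerivAt_of_nonneg hx1.le hcont hderiv hpos]
  simp only [F, sub_self, add_zero, zero_rpow hd.ne', zero_mul, mul_zero, neg_zero, zero_sub,
    neg_neg]
  rw [mul_rpow hw0.le h1x.le, rpow_sub_one hw0.ne', rpow_sub_one h1x.ne', rpow_neg h1x.le,
    rpow_neg hw0.le]
  have h1xd : (1 - x) ^ d ≠ 0 := (rpow_pos_of_pos h1x d).ne'
  have hwd : w ^ d ≠ 0 := (rpow_pos_of_pos hw0 d).ne'
  field_simp

theorem integrableOn_logKernel_fst (hx1 : x < 1) (hw0 : 0 < w) (hw1 : w ≤ 1) (hd : 0 < d) :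
    IntegrableOn (fun t => logKernel x d t w) (Ioc x 1) :=
  (intervalIntegrable_iff_integrableOn_Ioc_of_le hx1.le).1 <|
    intervalIntegrable_of_integral_ne_zero <| by
      rw [integral_logKernel_fst hx1 hw0 hw1 hd]
      exact (div_pos (rpow_pos_of_pos (by linarith) _) hw0).ne'

theorem integrableOn_logKernel (hx0 : 0 < x) (hx1 : x < 1) (hd : 0 < d) :
    IntegrableOn (Function.uncurry (logKernel x d)) (Ioc x 1 ×ˢ Ioc x 1) := by
  rw [IntegrableOn, Measure.volume_eq_prod, ← Measure.prod_restrict]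
  refine (integrable_prod_iff' (measurable_logKernel x d).aestronglyMeasurable).2 ⟨?_, ?_⟩
  · filter_upwards [ae_restrict_mem measurableSet_Ioc] with w hw
    exact integrableOn_logKernel_fst hx1 (hx0.trans hw.1) hw.2 hd
  · have hnorm : EqOn (fun w => (1 - x) ^ (d - 1) / w)
        (fun w => ∫ t in Ioc x 1, ‖Function.uncurry (logKernel x d) (t, w)‖) (Ioc x 1) := by
      intro w hw
      have hw0 : 0 < w := hx0.trans hw.1
      dsimp only
      rw [← integral_of_le hx1.le, ← integral_logKernel_fst hx1 hw0 hw.2 hd]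
      refine integral_congr fun t ht => ?_
      rw [uIcc_of_le hx1.le] at ht
      exact (norm_of_nonneg (logKernel_nonneg hd.le ht.1 ht.2 hw0.le)).symm
    refine IntegrableOn.congr_fun ?_ hnorm measurableSet_Ioc
    refine (ContinuousOn.integrableOn_Icc ?_).mono_set Ioc_subset_Icc_self
    exact continuousOn_const.div continuousOn_id fun w hw => (hx0.trans_le hw.1).ne'

end logKernel

theorem integral_one_sub_rpow_mul_one_sub_div_rpow {x d : ℝ} (hx0 : 0 < x) (hx1 : x < 1)
    (hd : 0 < d) :
    ∫ t in x..1, (1 - t) ^ (d - 1) * ((1 - (x / t) ^ d) / (t - x))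
      = (1 - x) ^ (d - 1) * log (1 / x) := by
  have hIoc : ∀ {f g : ℝ → ℝ}, (∀ y ∈ Ioc x 1, f y = g y) →
      ∫ y in x..1, f y = ∫ y in x..1, g y :=
    fun h => integral_congr_ae (.of_forall fun y hy => h y (by rwa [uIoc_of_le hx1.le] at hy))
  calc ∫ t in x..1, (1 - t) ^ (d - 1) * ((1 - (x / t) ^ d) / (t - x))
      = ∫ t in x..1, ∫ w in x..1, logKernel x d t w :=
        hIoc fun t ht => (integral_logKernel_snd hx0 ht.1 ht.2 hd).symm
    _ = ∫ w in x..1, ∫ t in x..1, logKernel x d t w := by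
        apply intervalIntegral_intervalIntegral_swap
        rw [uIoc_of_le hx1.le]
        exact integrableOn_logKernel hx0 hx1 hd
    _ = ∫ w in x..1, (1 - x) ^ (d - 1) * w⁻¹ :=
        hIoc fun w hw => (integral_logKernel_fst hx1 (hx0.trans hw.1) hw.2 hd).trans
          (div_eq_mul_inv _ _)
    _ = (1 - x) ^ (d - 1) * log (1 / x) := by
        rw [intervalIntegral.integral_const_mul, integral_inv_of_pos hx0 one_pos]

/-- Integral equation (39) of the paper specialized to `p = 1`:
for `0 < x < 1` and `b > a`,
`∫_x^1 t^a (1-t)^(b-a-1) ((x/t)^a - (x/t)^b)/(t-x) dt = x^a (1-x)^(b-a-1) log(1/x)`. -/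
theorem stmt0 (x a b : ℝ) (hx0 : 0 < x) (hx1 : x < 1) (hab : a < b) :
    ∫ t in x..1, t ^ a * (1 - t) ^ (b - a - 1) * ((x / t) ^ a - (x / t) ^ b) / (t - x)
      = x ^ a * (1 - x) ^ (b - a - 1) * Real.log (1 / x) := by
  have hintegrand : ∀ t ∈ uIcc x 1,
      t ^ a * (1 - t) ^ (b - a - 1) * ((x / t) ^ a - (x / t) ^ b) / (t - x)
        = x ^ a * ((1 - t) ^ (b - a - 1) * ((1 - (x / t) ^ (b - a)) / (t - x))) := by
    intro t ht
    rw [uIcc_of_le hx1.le] at ht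
    have ht0 : 0 < t := hx0.trans_le ht.1
    have hxt : 0 < x / t := div_pos hx0 ht0
    have hb : (x / t) ^ b = (x / t) ^ a * (x / t) ^ (b - a) := by
      rw [← rpow_add hxt, add_sub_cancel]
    have ha : t ^ a * (x / t) ^ a = x ^ a := by
      rw [← mul_rpow ht0.le hxt.le, mul_div_cancel₀ x ht0.ne']
    rw [hb, ← ha]
    ring
  rw [integral_congr hintegrand, intervalIntegral.integral_const_mul,
    integral_one_sub_rpow_mul_one_sub_div_rpow hx0 hx1 (sub_pos.2 hab), mul_assoc]
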